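/- arXiv:2603.27334 — 4 statements merged into one kernel-verified Lean document; each statement's English description precedes it below -/
import Mathlib

section
/- Let R be a finite commutative chain ring with maximal ideal ⟨γ⟩, nilpotency index s, and residue field of size q, and set M = q/(q-1). Let C ⊆ R^n be a linear code of rank K with 1 ≤ K, and suppose C is MHD, i.e., d_Hom(C) > M·(n - K). Then the socle C_0 = C ∩ ⟨γ^{s-1}⟩^n satisfies |C_0| = q^K and every nonzero element of C_0 has Hamming weight at least n - K + 1 (equivalently, C_0 viewed over the residue field F_q is an MDS code of dimension K with minimum Hamming distance n - K + 1). -/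
open scoped BigOperators Classical

/-- The normalized homogeneous weight on a finite chain ring with maximal ideal `⟨γ⟩`,
nilpotency index `s` and residue field of size `q`. -/
noncomputable def wtHom {R : Type*} [CommRing R] (γ : R) (s q : ℕ) (x : R) : ℚ :=
  if x = 0 then 0
  else if x ∈ Ideal.span {γ ^ (s - 1)} then (q : ℚ) / ((q : ℚ) - 1)
  else 1

/-- Homogeneous weight of a vector: the sum of the weights of its coordinates. -/
noncomputable def wtHomV {R : Type*} [CommRing R] (γ : R) (s q : ℕ) {n : ℕ}
    (v : Fin n → R) : ℚ :=
  ∑ i, wtHom γ s q (v i)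

/-- Hamming weight of a vector: the number of nonzero coordinates. -/
noncomputable def hWt {R : Type*} [Zero R] {n : ℕ} (v : Fin n → R) : ℕ :=
  Nat.card {i : Fin n // v i ≠ 0}

/-- `K` is the rank of the code `C`: the least cardinality of a generating set of `C`
as an `R`-module. -/
def IsCodeRank {R : Type*} [CommRing R] {n : ℕ} (C : Submodule R (Fin n → R)) (K : ℕ) : Prop :=
  IsLeast {k : ℕ | ∃ S : Finset (Fin n → R),
    S.card = k ∧ Submodule.span R (S : Set (Fin n → R)) = C} K

/-- The socle of a code: the codewords all of whose coordinates lie in `⟨γ^(s-1)⟩`. -/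
def socleCode {R : Type*} [CommRing R] (γ : R) (s : ℕ) {n : ℕ}
    (C : Submodule R (Fin n → R)) : Submodule R (Fin n → R) :=
  C ⊓ Submodule.pi Set.univ (fun _ : Fin n => Ideal.span {γ ^ (s - 1)})

/-! Multiplication by `γ` is an endomorphism of `C` with image `γC = 𝔪C` and, because `R` is a
chain ring, kernel the socle `C₀`; comparing `|C| = |C₀|·|γC| = |C/𝔪C|·|γC|` gives
`|C₀| = |C/𝔪C| = q ^ K` by Nakayama. Every nonzero coordinate of a socle word has homogeneous
weight `q/(q-1)`, so on `C₀` the MHD bound reads `q/(q-1) · wt_H(c) > q/(q-1) · (n - K)`. -/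

open IsLocalRing

theorem LinearMap.natCard_ker_eq_natCard_quotient_range {R M : Type*} [Ring R] [AddCommGroup M]
    [Module R M] [Finite M] (f : M →ₗ[R] M) :
    Nat.card (LinearMap.ker f) = Nat.card (M ⧸ LinearMap.range f) := by
  have hker := (LinearMap.ker f).card_eq_card_quotient_mul_card
  have hrange := (LinearMap.range f).card_eq_card_quotient_mul_card
  rw [Nat.card_congr f.quotKerEquivRange.toEquiv, hrange, mul_comm] at hker
  exact (Nat.eq_of_mul_eq_mul_right Nat.card_pos hker).symm

open scoped Pointwise in
theorem range_toLinearMap_eq_span_singleton_smul_top {R M : Type*} [CommRing R] [AddCommGroup M]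
    [Module R M] (γ : R) :
    LinearMap.range (DistribSMul.toLinearMap R M γ) = Ideal.span {γ} • ⊤ := by
  rw [Submodule.ideal_span_singleton_smul, LinearMap.range_eq_map]
  rfl

namespace IsLocalRing

variable {R : Type*} [CommRing R] [IsLocalRing R] {γ : R}

theorem one_lt_natCard_quotient_maximalIdeal [Finite R] : 1 < Nat.card (R ⧸ maximalIdeal R) := by
  have : Finite (R ⧸ maximalIdeal R) := Finite.of_surjective _ Ideal.Quotient.mk_surjective
  let := Ideal.Quotient.field (maximalIdeal R)
  exact Finite.one_lt_card

theorem natCard_quotient_maximalIdeal_smul_top [Finite R] {M : Type*} [AddCommGroup M]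
    [Module R M] (N : Submodule R M) (hN : N.FG) :
    Nat.card (N ⧸ maximalIdeal R • (⊤ : Submodule R N)) =
      Nat.card (R ⧸ maximalIdeal R) ^ N.spanFinrank := by
  have : Module.Finite R N := Module.Finite.iff_fg.mpr hN
  have : Finite (R ⧸ maximalIdeal R) := Finite.of_surjective _ Ideal.Quotient.mk_surjective
  let := Ideal.Quotient.field (maximalIdeal R)
  rw [spanFinrank_eq_finrank_quotient N hN,
    Module.natCard_eq_pow_finrank (K := R ⧸ maximalIdeal R)]

theorem mem_span_pow_succ_of_mul_eq_zero (hmax : maximalIdeal R = Ideal.span {γ}) {j : ℕ}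
    (hj : γ ^ (j + 1) ≠ 0) {x : R} (hx : x ∈ Ideal.span {γ ^ j}) (h : γ * x = 0) :
    x ∈ Ideal.span {γ ^ (j + 1)} := by
  obtain ⟨y, rfl⟩ := Ideal.mem_span_singleton'.mp hx
  -- a unit `y` would give `γ ^ (j + 1) = 0`
  have hy : y ∈ maximalIdeal R := fun hu ↦
    hj <| hu.mul_right_eq_zero.mp (by rw [pow_succ', mul_left_comm, h])
  obtain ⟨z, rfl⟩ := Ideal.mem_span_singleton'.mp (hmax ▸ hy)
  exact Ideal.mem_span_singleton'.mpr ⟨z, by ring⟩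

theorem mem_span_pow_of_mul_eq_zero (hmax : maximalIdeal R = Ideal.span {γ}) {t : ℕ}
    (ht : γ ^ t ≠ 0) {x : R} (h : γ * x = 0) : x ∈ Ideal.span {γ ^ t} := by
  induction t with
  | zero => simp
  | succ j ih =>
    exact mem_span_pow_succ_of_mul_eq_zero hmax ht
      (ih fun hj ↦ ht (by rw [pow_succ, hj, zero_mul])) h

theorem mul_eq_zero_iff_mem_span_pow_pred (hmax : maximalIdeal R = Ideal.span {γ}) {s : ℕ}
    (hnil : γ ^ s = 0) (hnil' : γ ^ (s - 1) ≠ 0) {x : R} :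
    γ * x = 0 ↔ x ∈ Ideal.span {γ ^ (s - 1)} := by
  refine ⟨mem_span_pow_of_mul_eq_zero hmax hnil', fun hx ↦ ?_⟩
  obtain ⟨y, rfl⟩ := Ideal.mem_span_singleton'.mp hx
  have hs : s - 1 + 1 = s := Nat.sub_add_cancel <| Nat.one_le_iff_ne_zero.mpr <| by
    rintro rfl; exact hnil' hnil
  rw [mul_left_comm, ← pow_succ', hs, hnil, mul_zero]

end IsLocalRing

theorem IsCodeRank.spanFinrank_eq {R : Type*} [CommRing R] {n : ℕ}
    {C : Submodule R (Fin n → R)} {K : ℕ} (hK : IsCodeRank C K) : C.spanFinrank = K := by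
  obtain ⟨S, hScard, hSspan⟩ := hK.1
  refine le_antisymm ?_ ?_
  · rw [← hSspan, ← hScard, ← Set.ncard_coe_finset]
    exact Submodule.spanFinrank_span_le_ncard_of_finite S.finite_toSet
  · obtain ⟨T, hTcard, hTspan⟩ :=
      Submodule.FG.exists_span_finset_card_eq_spanFinrank ⟨S, hSspan⟩
    exact hK.2 ⟨T, hTcard, hTspan⟩

theorem hWt_pos {R : Type*} [Zero R] {n : ℕ} {v : Fin n → R} (hv : v ≠ 0) : 0 < hWt v := by
  obtain ⟨i, hi⟩ := Function.ne_iff.mp hv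
  have : Nonempty {i : Fin n // v i ≠ 0} := ⟨⟨i, hi⟩⟩
  exact Nat.card_pos

theorem wtHomV_eq_hWt_mul {R : Type*} [CommRing R] (γ : R) (s q : ℕ) {n : ℕ} {v : Fin n → R}
    (hv : ∀ i, v i ∈ Ideal.span {γ ^ (s - 1)}) :
    wtHomV γ s q v = hWt v * ((q : ℚ) / ((q : ℚ) - 1)) := by
  have hcoord : ∀ i, wtHom γ s q (v i) = if v i ≠ 0 then (q : ℚ) / ((q : ℚ) - 1) else 0 := by
    intro i
    by_cases h : v i = 0 <;> simp [wtHom, h, hv i]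
  rw [wtHomV, Finset.sum_congr rfl fun i _ ↦ hcoord i, Finset.sum_ite, Finset.sum_const_zero,
    add_zero, Finset.sum_const, nsmul_eq_mul, hWt, Nat.card_eq_fintype_card,
    Fintype.card_subtype]

theorem le_hWt_of_mem_socleCode {R : Type*} [CommRing R] {γ : R} {s q n K : ℕ} (hq : 1 < q)
    {C : Submodule R (Fin n → R)} {c : Fin n → R} (hc : c ∈ socleCode γ s C) (hc0 : c ≠ 0)
    (hwt : (q : ℚ) / ((q : ℚ) - 1) * ((n : ℚ) - (K : ℚ)) < wtHomV γ s q c) :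
    n - K + 1 ≤ hWt c := by
  have hM : 0 < (q : ℚ) / ((q : ℚ) - 1) := by
    have : (1 : ℚ) < q := by exact_mod_cast hq
    exact div_pos (by linarith) (by linarith)
  rw [wtHomV_eq_hWt_mul γ s q fun i ↦ (Submodule.mem_pi.mp hc.2) i trivial, mul_comm] at hwt
  have hlt : (n : ℚ) < hWt c + K := by linarith [lt_of_mul_lt_mul_right hwt hM.le]
  have := hWt_pos hc0
  have : n < hWt c + K := by exact_mod_cast hlt
  omega

section Socle

variable {R : Type*} [CommRing R] [IsLocalRing R] {γ : R} {s : ℕ} {n : ℕ}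

theorem mem_socleCode_iff (hmax : maximalIdeal R = Ideal.span {γ}) (hnil : γ ^ s = 0)
    (hnil' : γ ^ (s - 1) ≠ 0) {C : Submodule R (Fin n → R)} {c : Fin n → R} :
    c ∈ socleCode γ s C ↔ c ∈ C ∧ γ • c = 0 := by
  simp only [socleCode, Submodule.mem_inf, Submodule.mem_pi, Set.mem_univ, true_implies,
    funext_iff, Pi.smul_apply, smul_eq_mul, Pi.zero_apply,
    mul_eq_zero_iff_mem_span_pow_pred hmax hnil hnil']

theorem natCard_socleCode [Finite R] (hmax : maximalIdeal R = Ideal.span {γ}) (hnil : γ ^ s = 0)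
    (hnil' : γ ^ (s - 1) ≠ 0) (C : Submodule R (Fin n → R)) :
    Nat.card (socleCode γ s C) = Nat.card (C ⧸ maximalIdeal R • (⊤ : Submodule R C)) := by
  have hker : LinearMap.ker (DistribSMul.toLinearMap R C γ) =
      (socleCode γ s C).comap C.subtype := by
    ext x
    simp [mem_socleCode_iff hmax hnil hnil', Subtype.ext_iff]
  rw [hmax, ← range_toLinearMap_eq_span_singleton_smul_top,
    ← LinearMap.natCard_ker_eq_natCard_quotient_range, hker]
  exact Nat.card_congr (Submodule.comapSubtypeEquivOfLe inf_le_left).toEquiv.symm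

end Socle

theorem mhd_socle_mds_general {R : Type*} [CommRing R] [IsLocalRing R] [Fintype R]
    (γ : R) (s q : ℕ)
    (hmax : IsLocalRing.maximalIdeal R = Ideal.span {γ})
    (hnil : γ ^ s = 0) (hnil' : γ ^ (s - 1) ≠ 0)
    (hq : Nat.card (R ⧸ IsLocalRing.maximalIdeal R) = q)
    {n : ℕ} (C : Submodule R (Fin n → R)) (K : ℕ)
    (hK : IsCodeRank C K)
    (hMHD : ∀ c ∈ C, c ≠ 0 →
      (q : ℚ) / ((q : ℚ) - 1) * ((n : ℚ) - (K : ℚ)) < wtHomV γ s q c) :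
    Nat.card (socleCode γ s C) = q ^ K ∧
      ∀ c ∈ socleCode γ s C, c ≠ 0 → n - K + 1 ≤ hWt c := by
  refine ⟨?_, fun c hc hc0 ↦ ?_⟩
  · rw [natCard_socleCode hmax hnil hnil', natCard_quotient_maximalIdeal_smul_top C
      (Submodule.FG.of_finite), hq, hK.spanFinrank_eq]
  · exact le_hWt_of_mem_socleCode (hq ▸ one_lt_natCard_quotient_maximalIdeal) hc hc0
      (hMHD c hc.1 hc0)

/-- If `C` is an MHD code of rank `K ≥ 1`, then its socle has cardinality `q^K`
and every nonzero socle element has Hamming weight at least `n - K + 1`,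
i.e. the socle is an MDS code. -/
theorem mhd_socle_mds {R : Type*} [CommRing R] [IsLocalRing R] [Fintype R]
    (γ : R) (s q : ℕ) (hs : 1 ≤ s)
    (hmax : IsLocalRing.maximalIdeal R = Ideal.span {γ})
    (hnil : γ ^ s = 0) (hnil' : γ ^ (s - 1) ≠ 0)
    (hq : Nat.card (R ⧸ IsLocalRing.maximalIdeal R) = q)
    {n : ℕ} (C : Submodule R (Fin n → R)) (K : ℕ) (hK1 : 1 ≤ K)
    (hK : IsCodeRank C K)
    (hMHD : ∀ c ∈ C, c ≠ 0 →
      (q : ℚ) / ((q : ℚ) - 1) * ((n : ℚ) - (K : ℚ)) < wtHomV γ s q c) :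
    Nat.card (socleCode γ s C) = q ^ K ∧
      ∀ c ∈ socleCode γ s C, c ≠ 0 → n - K + 1 ≤ hWt c :=
  mhd_socle_mds_general γ s q hmax hnil hnil' hq C K hK hMHD
end

section
/- Let R be a finite commutative chain ring with maximal ideal ⟨γ⟩, nilpotency index s, and residue field of size q. Let C ⊆ R^n be a linear code which is non-degenerate, i.e., for every coordinate i ∈ {1,…,n} there exists c ∈ C with c_i ≠ 0. Then the average homogeneous weight of C equals n: (1/|C|)·Σ_{c ∈ C} wt_Hom(c) = n. -/
open scoped BigOperators Classical

/-! For each coordinate `i`, the projection `c ↦ c i` maps `C` onto a nonzero ideal `I` of `R`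
with fibres of equal size, so the average of `wt_Hom (c i)` over `C` is the average of `wt_Hom`
over `I`. In a chain ring every nonzero ideal contains the minimal ideal `⟨γ^(s-1)⟩ ≅ R/⟨γ⟩`,
which has `q` elements. Its `q - 1` nonzero elements have weight `q/(q-1)` and the remaining
nonzero elements of `I` weight `1`, so the weights over `I` sum to `q + (|I| - q) = |I|` and each
of the `n` coordinates contributes `1` to the average. -/

open IsLocalRing LinearMap

section ChainRing

variable {R : Type*} [CommRing R] [IsLocalRing R] {γ : R} {s : ℕ}

theorem exists_eq_unit_mul_pow (hmax : maximalIdeal R = Ideal.span {γ}) (hnil : γ ^ s = 0)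
    {x : R} (hx : x ≠ 0) : ∃ (u : Rˣ) (j : ℕ), j < s ∧ x = u * γ ^ j := by
  -- `j` is the largest exponent with `x ∈ ⟨γ^j⟩`; maximality forces the cofactor out of `⟨γ⟩`.
  set j := Nat.findGreatest (fun j => x ∈ Ideal.span {γ ^ j}) s
  have hxj : x ∈ Ideal.span {γ ^ j} :=
    Nat.findGreatest_spec (P := fun j => x ∈ Ideal.span {γ ^ j}) (Nat.zero_le s) <| by
      simp only [pow_zero, Ideal.span_singleton_one, Submodule.mem_top]
  have hjs : j < s := by
    refine lt_of_le_of_ne (Nat.findGreatest_le s) fun hj => hx ?_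
    rwa [hj, hnil, Ideal.span_singleton_eq_bot.mpr rfl, Ideal.mem_bot] at hxj
  obtain ⟨a, hax⟩ := Ideal.mem_span_singleton'.mp hxj
  have ha : IsUnit a := by
    by_contra ha
    have ha' : a ∈ Ideal.span {γ} := by
      rw [← hmax]
      exact ha
    obtain ⟨b, rfl⟩ := Ideal.mem_span_singleton'.mp ha'
    refine Nat.findGreatest_is_greatest (lt_add_one j) hjs ?_
    exact Ideal.mem_span_singleton'.mpr ⟨b, by rw [← hax]; ring⟩
  exact ⟨ha.unit, j, hjs, by rw [ha.unit_spec, hax]⟩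

theorem span_pow_pred_le_of_mem (hmax : maximalIdeal R = Ideal.span {γ}) (hnil : γ ^ s = 0)
    {I : Ideal R} {x : R} (hxI : x ∈ I) (hx : x ≠ 0) : Ideal.span {γ ^ (s - 1)} ≤ I := by
  obtain ⟨u, j, hjs, rfl⟩ := exists_eq_unit_mul_pow hmax hnil hx
  have h : γ ^ (s - 1) = (↑u⁻¹ * γ ^ (s - 1 - j)) * (u * γ ^ j) := by
    rw [mul_mul_mul_comm, Units.inv_mul, one_mul, ← pow_add, Nat.sub_add_cancel (by omega)]
  rw [Ideal.span_singleton_le_iff_mem, h]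
  exact I.mul_mem_left _ hxI

theorem torsionOf_pow_pred_eq_maximalIdeal (hmax : maximalIdeal R = Ideal.span {γ})
    (hnil : γ ^ s = 0) (hnil' : γ ^ (s - 1) ≠ 0) :
    Ideal.torsionOf R R (γ ^ (s - 1)) = maximalIdeal R := by
  have hs : 1 ≤ s := Nat.one_le_iff_ne_zero.mpr <| by
    rintro rfl
    exact one_ne_zero (pow_zero γ ▸ hnil)
  refine le_antisymm (le_maximalIdeal ?_) ?_
  · rwa [Ne, Ideal.torsionOf_eq_top_iff]
  · rw [hmax, Ideal.span_singleton_le_iff_mem, Ideal.mem_torsionOf_iff, smul_eq_mul,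
      ← pow_succ', Nat.sub_add_cancel hs, hnil]

theorem card_span_pow_pred_eq_card_quotient (hmax : maximalIdeal R = Ideal.span {γ})
    (hnil : γ ^ s = 0) (hnil' : γ ^ (s - 1) ≠ 0) :
    Nat.card (Ideal.span {γ ^ (s - 1)}) = Nat.card (R ⧸ maximalIdeal R) := by
  rw [← torsionOf_pow_pred_eq_maximalIdeal hmax hnil hnil']
  exact (Nat.card_congr (Ideal.quotTorsionOfEquivSpanSingleton R R _).toEquiv).symm

end ChainRing

namespace LinearMap

variable {R M N : Type*} [Ring R] [AddCommGroup M] [Module R M] [AddCommGroup N] [Module R N]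
  (f : M →ₗ[R] N)

theorem card_ker_mul_card_range : Nat.card (ker f) * Nat.card (range f) = Nat.card M := by
  rw [← Nat.card_congr f.quotKerEquivRange.toEquiv, mul_comm]
  exact (AddSubgroup.card_eq_card_quotient_mul_card_addSubgroup (ker f).toAddSubgroup).symm

theorem sum_comp_eq_card_ker_mul [Fintype M] [Fintype (range f)] (g : N → ℚ) :
    ∑ x, g (f x) = Nat.card (ker f) * ∑ y : range f, g y := by
  have hfiber : ∀ y : range f,
      (Finset.univ.filter fun x => f.rangeRestrict x = y).card = Nat.card (ker f) := by
    intro y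
    rw [AddMonoidHom.card_fiber_eq_of_mem_range f.rangeRestrict (f.surjective_rangeRestrict y)
      ⟨0, map_zero _⟩, ← Fintype.card_subtype, ← Nat.card_eq_fintype_card, ← ker_rangeRestrict]
    rfl
  rw [← Finset.sum_fiberwise Finset.univ f.rangeRestrict, Finset.mul_sum]
  refine Finset.sum_congr rfl fun y _ => ?_
  rw [Finset.sum_congr rfl fun x hx => show g (f x) = g y from
      congrArg (fun z : range f => g z) (Finset.mem_filter.mp hx).2,
    Finset.sum_const, hfiber, nsmul_eq_mul]

theorem inv_card_mul_sum_comp [Fintype M] [Fintype (range f)] (g : N → ℚ) :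
    (Nat.card M : ℚ)⁻¹ * ∑ x, g (f x) = (Nat.card (range f) : ℚ)⁻¹ * ∑ y : range f, g y := by
  have hker : (Nat.card (ker f) : ℚ) ≠ 0 := Nat.cast_ne_zero.mpr Nat.card_pos.ne'
  rw [sum_comp_eq_card_ker_mul, ← card_ker_mul_card_range f, Nat.cast_mul]
  field_simp

end LinearMap

section Weight

variable {R : Type*} [CommRing R] (γ : R) (s : ℕ) {q : ℕ}

-- In this form a sum of weights over an ideal only needs the sizes of the ideal and of `⟨γ^(s-1)⟩`.
theorem wtHom_eq (hq : q ≠ 1) (x : R) : wtHom γ s q x =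
    1 + (if x ∈ Ideal.span {γ ^ (s - 1)} then ((q : ℚ) - 1)⁻¹ else 0)
      - (if x = 0 then (q : ℚ) / (q - 1) else 0) := by
  have hq' : (q : ℚ) - 1 ≠ 0 := sub_ne_zero.mpr (by exact_mod_cast hq)
  unfold wtHom
  split_ifs <;> simp_all <;> field_simp <;> ring

theorem sum_wtHom_of_span_le (I : Ideal R) [Fintype I] (hI : Ideal.span {γ ^ (s - 1)} ≤ I)
    (hcard : Nat.card (Ideal.span {γ ^ (s - 1)}) = q) (hq : q ≠ 1) :
    ∑ x : I, wtHom γ s q x = Nat.card I := by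
  have hS : (Finset.univ.filter fun x : I => (x : R) ∈ Ideal.span {γ ^ (s - 1)}).card = q := by
    rw [← hcard, ← Fintype.card_subtype, ← Nat.card_eq_fintype_card]
    exact Nat.card_congr (Equiv.subtypeSubtypeEquivSubtype fun h => hI h)
  have h0 : ∀ c : ℚ, ∑ x : I, (if (x : R) = 0 then c else 0) = c := fun c => by simp
  simp only [wtHom_eq γ s hq, Finset.sum_sub_distrib, Finset.sum_add_distrib, Finset.sum_ite,
    Finset.sum_const, hS, h0, smul_zero, add_zero, Finset.card_univ, nsmul_eq_mul, mul_one]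
  rw [Nat.card_eq_fintype_card]
  field_simp
  ring

end Weight

theorem avg_wtHom_code_general {R : Type*} [CommRing R] [IsLocalRing R] [Fintype R]
    (γ : R) (s q : ℕ)
    (hmax : IsLocalRing.maximalIdeal R = Ideal.span {γ})
    (hnil : γ ^ s = 0) (hnil' : γ ^ (s - 1) ≠ 0)
    (hq : Nat.card (R ⧸ IsLocalRing.maximalIdeal R) = q)
    {n : ℕ} (C : Submodule R (Fin n → R))
    (hnd : ∀ i : Fin n, ∃ c ∈ C, c i ≠ 0) :
    (Nat.card C : ℚ)⁻¹ * ∑ᶠ c ∈ (C : Set (Fin n → R)), wtHomV γ s q c = n := by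
  have hq1 : q ≠ 1 := hq ▸ (Finite.one_lt_card (α := R ⧸ maximalIdeal R)).ne'
  have hcard := (card_span_pow_pred_eq_card_quotient hmax hnil hnil').trans hq
  have hcoord : ∀ i, (Nat.card C : ℚ)⁻¹ * ∑ c : C, wtHom γ s q ((c : Fin n → R) i) = 1 := by
    intro i
    obtain ⟨c, hcC, hci⟩ := hnd i
    let f : C →ₗ[R] R := (proj i).comp C.subtype
    have hI : Ideal.span {γ ^ (s - 1)} ≤ range f :=
      span_pow_pred_le_of_mem hmax hnil ⟨⟨c, hcC⟩, rfl⟩ hci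
    change (Nat.card C : ℚ)⁻¹ * ∑ c : C, wtHom γ s q (f c) = 1
    rw [f.inv_card_mul_sum_comp (wtHom γ s q), sum_wtHom_of_span_le γ s _ hI hcard hq1,
      inv_mul_cancel₀ (Nat.cast_ne_zero.mpr Nat.card_pos.ne')]
  rw [← finsum_set_coe_eq_finsum_mem, finsum_eq_sum_of_fintype]
  simp only [wtHomV]
  rw [Finset.sum_comm, Finset.mul_sum]
  refine (Finset.sum_congr rfl fun i _ => hcoord i).trans ?_
  simp

/-- The average homogeneous weight of a non-degenerate linear code in `R^n` equals `n`. -/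
theorem avg_wtHom_code {R : Type*} [CommRing R] [IsLocalRing R] [Fintype R]
    (γ : R) (s q : ℕ) (hs : 1 ≤ s)
    (hmax : IsLocalRing.maximalIdeal R = Ideal.span {γ})
    (hnil : γ ^ s = 0) (hnil' : γ ^ (s - 1) ≠ 0)
    (hq : Nat.card (R ⧸ IsLocalRing.maximalIdeal R) = q)
    {n : ℕ} (C : Submodule R (Fin n → R))
    (hnd : ∀ i : Fin n, ∃ c ∈ C, c i ≠ 0) :
    (Nat.card C : ℚ)⁻¹ * ∑ᶠ c ∈ (C : Set (Fin n → R)), wtHomV γ s q c = n :=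
  avg_wtHom_code_general γ s q hmax hnil hnil' hq C hnd
end

section
/- Let R be a finite commutative chain ring with maximal ideal ⟨γ⟩, nilpotency index s, and residue field of size q. Let C ⊆ R^n be a nonzero linear code with minimum homogeneous distance d = d_Hom(C). Then d ≤ (|C|/(|C|−1))·n. Moreover, equality d = (|C|/(|C|−1))·n holds if and only if C is non-degenerate (for every coordinate i there is c ∈ C with c_i ≠ 0) and every nonzero codeword of C has homogeneous weight exactly d. -/
open scoped BigOperators Classical

/-! Double counting of the total weight `W = ∑_{c ∈ C} wt(c)`. Counted by codewords,
`W ≥ (|C| - 1) d`, with equality iff every nonzero codeword has weight `d`. Counted by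
coordinates, the map `c ↦ c i` has fibres of equal size and, unless it vanishes, a nonzero
ideal as image; every nonzero ideal of a chain ring contains the minimal ideal `⟨γ^(s-1)⟩`,
which has `q` elements, so on it `wt - 1` sums to `-1 + (q - 1) · 1/(q - 1) = 0`, while
`wt = 1` off it. Hence each non-degenerate coordinate contributes exactly `|C|` and
`W = |C| · #(support of C) ≤ |C| n`. -/

open Finset

theorem AddMonoidHom.sum_comp_eq_nsmul_sum_image {G H M : Type*} [AddGroup G] [Fintype G]
    [AddMonoid H] [DecidableEq H] [AddCommMonoid M] (φ : G →+ H) (f : H → M) :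
    ∑ g, f (φ g) = #{g | φ g = 0} • ∑ h ∈ univ.image φ, f h := by
  rw [sum_comp, smul_sum]
  refine sum_congr rfl fun h hh => ?_
  rw [card_fiber_eq_of_mem_range φ (by simpa using hh) ⟨0, map_zero φ⟩]

section ChainRing

variable {R : Type*} [CommRing R] [IsLocalRing R] {γ : R} {s q : ℕ}

theorem pow_pred_mem_span_singleton (hmax : IsLocalRing.maximalIdeal R = Ideal.span {γ})
    (hnil : γ ^ s = 0) {x : R} (hx : x ≠ 0) : γ ^ (s - 1) ∈ Ideal.span {x} := by
  suffices ∀ j ≤ s, x ∈ Ideal.span {γ ^ (s - j)} → γ ^ (s - 1) ∈ Ideal.span {x} from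
    this s le_rfl (by simp)
  intro j
  induction j with
  | zero => simp [hnil, hx]
  | succ j ih =>
    intro hj hxj
    obtain ⟨a, rfl⟩ := Ideal.mem_span_singleton'.mp hxj
    by_cases ha : IsUnit a
    · refine Ideal.mem_span_singleton'.mpr ⟨ha.unit⁻¹ * γ ^ j, ?_⟩
      calc ↑ha.unit⁻¹ * γ ^ j * (a * γ ^ (s - (j + 1)))
          = (↑ha.unit⁻¹ * a) * (γ ^ j * γ ^ (s - (j + 1))) := by ring
        _ = γ ^ (s - 1) := by rw [IsUnit.val_inv_mul, one_mul, ← pow_add]; congr 1; omega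
    · have : a ∈ Ideal.span {γ} := hmax ▸ (IsLocalRing.mem_maximalIdeal a).mpr ha
      obtain ⟨b, rfl⟩ := Ideal.mem_span_singleton'.mp this
      refine ih (by omega) (Ideal.mem_span_singleton'.mpr ⟨b, ?_⟩)
      rw [mul_assoc, ← pow_succ']
      congr 2
      omega

theorem card_span_pow_pred (hmax : IsLocalRing.maximalIdeal R = Ideal.span {γ})
    (hnil : γ ^ s = 0) (hnil' : γ ^ (s - 1) ≠ 0) :
    Nat.card (Ideal.span {γ ^ (s - 1)}) = Nat.card (R ⧸ IsLocalRing.maximalIdeal R) := by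
  have hs : s - 1 + 1 = s := by
    rcases s with _ | s
    · exact absurd hnil hnil'
    · rfl
  have htors : IsLocalRing.maximalIdeal R = Ideal.torsionOf R R (γ ^ (s - 1)) := by
    refine (IsLocalRing.maximalIdeal.isMaximal R).eq_of_le ?_ fun r hr => ?_
    · exact mt (Ideal.torsionOf_eq_top_iff R _).mp hnil'
    · obtain ⟨a, rfl⟩ := Ideal.mem_span_singleton'.mp (hmax ▸ hr)
      rw [Ideal.mem_torsionOf_iff, smul_eq_mul, mul_assoc, ← pow_succ', hs, hnil, mul_zero]
  rw [htors]
  exact (Nat.card_congr (Ideal.quotTorsionOfEquivSpanSingleton R R (γ ^ (s - 1))).toEquiv).symm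

variable [Fintype R]

theorem sum_wtHom_sub_one_span_pow_pred (hmax : IsLocalRing.maximalIdeal R = Ideal.span {γ})
    (hnil : γ ^ s = 0) (hnil' : γ ^ (s - 1) ≠ 0)
    (hq : Nat.card (R ⧸ IsLocalRing.maximalIdeal R) = q) :
    ∑ x ∈ univ.filter (· ∈ Ideal.span {γ ^ (s - 1)}), (wtHom γ s q x - 1) = 0 := by
  have hcard : #(univ.filter (· ∈ Ideal.span {γ ^ (s - 1)})) = q := by
    rw [← hq, ← card_span_pow_pred hmax hnil hnil', ← Fintype.card_subtype,
      Nat.card_eq_fintype_card]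
  have hq1 : 1 < q := hq ▸ Finite.one_lt_card
  have hq_sub : (q : ℚ) - 1 ≠ 0 := by
    rw [sub_ne_zero]; exact_mod_cast hq1.ne'
  have h0 : (0 : R) ∈ univ.filter (· ∈ Ideal.span {γ ^ (s - 1)}) := by simp
  have hsocle : ∀ x ∈ (univ.filter (· ∈ Ideal.span {γ ^ (s - 1)})).erase 0,
      wtHom γ s q x - 1 = 1 / ((q : ℚ) - 1) := by
    intro x hx
    simp only [mem_erase, mem_filter, mem_univ, true_and] at hx
    rw [wtHom, if_neg hx.1, if_pos hx.2]
    field_simp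
    ring
  rw [← add_sum_erase _ _ h0, sum_congr rfl hsocle, sum_const, card_erase_of_mem h0, hcard,
    nsmul_eq_mul, Nat.cast_pred (by omega), wtHom, if_pos rfl]
  field_simp
  ring

theorem sum_wtHom_eq_card (hmax : IsLocalRing.maximalIdeal R = Ideal.span {γ})
    (hnil : γ ^ s = 0) (hnil' : γ ^ (s - 1) ≠ 0)
    (hq : Nat.card (R ⧸ IsLocalRing.maximalIdeal R) = q) {t : Finset R}
    (ht : univ.filter (· ∈ Ideal.span {γ ^ (s - 1)}) ⊆ t) :
    ∑ x ∈ t, wtHom γ s q x = #t := by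
  have hweight_one : ∀ x ∈ t, x ∉ univ.filter (· ∈ Ideal.span {γ ^ (s - 1)}) →
      wtHom γ s q x - 1 = 0 := by
    intro x _ hx
    simp only [mem_filter, mem_univ, true_and] at hx
    simp [wtHom, hx, ne_of_mem_of_not_mem (Ideal.zero_mem _) hx |>.symm]
  rw [← sub_eq_zero, ← nsmul_one, ← sum_const, ← sum_sub_distrib, ← sum_subset ht hweight_one]
  exact sum_wtHom_sub_one_span_pow_pred hmax hnil hnil' hq

theorem sum_wtHom_apply_eq_card (hmax : IsLocalRing.maximalIdeal R = Ideal.span {γ})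
    (hnil : γ ^ s = 0) (hnil' : γ ^ (s - 1) ≠ 0)
    (hq : Nat.card (R ⧸ IsLocalRing.maximalIdeal R) = q) {n : ℕ}
    (C : Submodule R (Fin n → R)) {i : Fin n} (hi : ∃ c ∈ C, c i ≠ 0) :
    ∑ c : C, wtHom γ s q ((c : Fin n → R) i) = Nat.card C := by
  let φ : C →+ R := ((LinearMap.proj i).comp C.subtype).toAddMonoidHom
  have hsocle : univ.filter (· ∈ Ideal.span {γ ^ (s - 1)}) ⊆ univ.image φ := by
    obtain ⟨c, hc, hci⟩ := hi
    obtain ⟨a, ha⟩ := Ideal.mem_span_singleton'.mp (pow_pred_mem_span_singleton hmax hnil hci)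
    intro y hy
    obtain ⟨r, rfl⟩ := Ideal.mem_span_singleton'.mp (mem_filter.mp hy).2
    exact mem_image.mpr ⟨(r * a) • ⟨c, hc⟩, mem_univ _, by simp [φ, ← ha, mul_assoc]⟩
  calc ∑ c : C, wtHom γ s q (φ c)
      = #{c | φ c = 0} • ∑ y ∈ univ.image φ, wtHom γ s q y := φ.sum_comp_eq_nsmul_sum_image _
    _ = #{c | φ c = 0} • ∑ y ∈ univ.image φ, (1 : ℚ) := by
      rw [sum_wtHom_eq_card hmax hnil hnil' hq hsocle, sum_const, nsmul_one]
    _ = ∑ c : C, (1 : ℚ) := (φ.sum_comp_eq_nsmul_sum_image _).symm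
    _ = Nat.card C := by simp

theorem sum_wtHomV_eq (hmax : IsLocalRing.maximalIdeal R = Ideal.span {γ})
    (hnil : γ ^ s = 0) (hnil' : γ ^ (s - 1) ≠ 0)
    (hq : Nat.card (R ⧸ IsLocalRing.maximalIdeal R) = q) {n : ℕ}
    (C : Submodule R (Fin n → R)) :
    ∑ c : C, wtHomV γ s q (c : Fin n → R) = Nat.card C * #{i | ∃ c ∈ C, c i ≠ 0} := by
  simp only [wtHomV]
  rw [sum_comm, card_filter, Nat.cast_sum, mul_sum]
  refine sum_congr rfl fun i _ => ?_
  split_ifs with hi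
  · rw [sum_wtHom_apply_eq_card hmax hnil hnil' hq C hi, Nat.cast_one, mul_one]
  · simp_all [wtHom]

end ChainRing

theorem card_sub_one_mul_le_sum_wtHomV {R : Type*} [CommRing R] [Fintype R] {γ : R}
    {s q n : ℕ} {C : Submodule R (Fin n → R)} {d : ℚ} (hd : ∀ c ∈ C, c ≠ 0 → d ≤ wtHomV γ s q c) :
    ((Nat.card C : ℚ) - 1) * d ≤ ∑ c : C, wtHomV γ s q (c : Fin n → R) ∧
      (((Nat.card C : ℚ) - 1) * d = ∑ c : C, wtHomV γ s q (c : Fin n → R) ↔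
        ∀ c ∈ C, c ≠ 0 → wtHomV γ s q c = d) := by
  have hW : ∑ c : C, wtHomV γ s q (c : Fin n → R) =
      ∑ c ∈ univ.erase (0 : C), wtHomV γ s q (c : Fin n → R) :=
    (sum_erase _ (by simp [wtHomV, wtHom])).symm
  have hN : ((Nat.card C : ℚ) - 1) * d = ∑ _c ∈ univ.erase (0 : C), d := by
    rw [sum_const, card_erase_of_mem (mem_univ _), card_univ, nsmul_eq_mul,
      Nat.cast_pred Fintype.card_pos, Nat.card_eq_fintype_card]
  have hle : ∀ c ∈ univ.erase (0 : C), d ≤ wtHomV γ s q (c : Fin n → R) :=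
    fun c hc => hd c c.2 (by simpa using ne_of_mem_erase hc)
  rw [hW, hN]
  refine ⟨sum_le_sum hle, (sum_eq_sum_iff_of_le hle).trans
    ⟨fun h c hc hc0 => (h ⟨c, hc⟩ (by simpa using hc0)).symm, fun h c hc => (h c c.2 ?_).symm⟩⟩
  simpa using ne_of_mem_erase hc

theorem homogeneous_plotkin_bound_general {R : Type*} [CommRing R] [IsLocalRing R] [Fintype R]
    (γ : R) (s q : ℕ)
    (hmax : IsLocalRing.maximalIdeal R = Ideal.span {γ})
    (hnil : γ ^ s = 0) (hnil' : γ ^ (s - 1) ≠ 0)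
    (hq : Nat.card (R ⧸ IsLocalRing.maximalIdeal R) = q)
    {n : ℕ} (C : Submodule R (Fin n → R)) (d : ℚ)
    (hd : IsLeast {w : ℚ | ∃ c ∈ C, c ≠ 0 ∧ wtHomV γ s q c = w} d) :
    d ≤ (Nat.card C : ℚ) / ((Nat.card C : ℚ) - 1) * n ∧
      (d = (Nat.card C : ℚ) / ((Nat.card C : ℚ) - 1) * n ↔
        ((∀ i : Fin n, ∃ c ∈ C, c i ≠ 0) ∧
          ∀ c ∈ C, c ≠ 0 → wtHomV γ s q c = d)) := by
  obtain ⟨c₀, hc₀, hc₀0, -⟩ := hd.1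
  have hN : 1 < (Nat.card C : ℚ) := by
    have : Nontrivial C := nontrivial_of_ne ⟨c₀, hc₀⟩ 0 (by simpa using hc₀0)
    exact_mod_cast Finite.one_lt_card
  obtain ⟨hlow, hlow_eq⟩ := card_sub_one_mul_le_sum_wtHomV fun c hc hc0 => hd.2 ⟨c, hc, hc0, rfl⟩
  rw [sum_wtHomV_eq hmax hnil hnil' hq C] at hlow hlow_eq
  set N : ℚ := (Nat.card C : ℚ)
  set k := #{i | ∃ c ∈ C, c i ≠ 0}
  have hk : k ≤ n := (card_filter_le _ _).trans_eq (card_fin n)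
  have hk_eq : k = n ↔ ∀ i, ∃ c ∈ C, c i ≠ 0 := by
    simpa using card_filter_eq_iff (s := univ) (p := fun i : Fin n => ∃ c ∈ C, c i ≠ 0)
  have hup : N * k ≤ N * n := by gcongr
  have hd_iff : d = N / (N - 1) * n ↔ (N - 1) * d = N * n := by
    rw [div_mul_eq_mul_div, eq_div_iff (by linarith), mul_comm]
  refine ⟨by rw [div_mul_eq_mul_div, le_div_iff₀ (by linarith)]; linarith,
    hd_iff.trans ⟨fun h => ⟨?_, hlow_eq.mp (by linarith)⟩, fun ⟨h1, h2⟩ => ?_⟩⟩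
  · have hNk : N * k = N * n := by linarith
    exact hk_eq.mp (by exact_mod_cast mul_left_cancel₀ (by positivity) hNk)
  · rw [hlow_eq.mpr h2, hk_eq.mpr h1]

/-- Plotkin bound for the homogeneous weight: `d ≤ |C|/(|C|-1)·n`, with equality iff
the code is non-degenerate and of constant homogeneous weight `d`. -/
theorem homogeneous_plotkin_bound {R : Type*} [CommRing R] [IsLocalRing R] [Fintype R]
    (γ : R) (s q : ℕ) (hs : 1 ≤ s)
    (hmax : IsLocalRing.maximalIdeal R = Ideal.span {γ})
    (hnil : γ ^ s = 0) (hnil' : γ ^ (s - 1) ≠ 0)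
    (hq : Nat.card (R ⧸ IsLocalRing.maximalIdeal R) = q)
    {n : ℕ} (C : Submodule R (Fin n → R)) (hC : C ≠ ⊥) (d : ℚ)
    (hd : IsLeast {w : ℚ | ∃ c ∈ C, c ≠ 0 ∧ wtHomV γ s q c = w} d) :
    d ≤ (Nat.card C : ℚ) / ((Nat.card C : ℚ) - 1) * n ∧
      (d = (Nat.card C : ℚ) / ((Nat.card C : ℚ) - 1) * n ↔
        ((∀ i : Fin n, ∃ c ∈ C, c i ≠ 0) ∧
          ∀ c ∈ C, c ≠ 0 → wtHomV γ s q c = d)) :=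
  homogeneous_plotkin_bound_general γ s q hmax hnil hnil' hq C d hd
end

section
/- Let R be a finite commutative chain ring with maximal ideal ⟨γ⟩, nilpotency index s, and residue field of size q. Let C ⊆ R^n be a linear code of rank K ≥ 1 with minimum homogeneous distance d = d_Hom(C). Then d ≤ (q^K/(q^K − 1))·n. -/
open scoped BigOperators Classical

open Finset IsLocalRing

/-! Double counting, as in Plotkin's bound. Summed over the `|C|` codewords, the homogeneous
weight is at least `(|C| - 1) d`. In each coordinate, the projection of `C` is an additive
homomorphism, so it takes every value of its image `T` equally often; as the socle
`⟨γ^(s-1)⟩` has at most `q` elements, the weight summed over `T` is at most `|T|`, and the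
total is at most `n |C|`. Finally, the coefficients of a relation among a minimal generating
set of `C` all lie in the maximal ideal, so distinct residues give distinct codewords and
`|C| ≥ q^K`; since `t ↦ t / (t - 1)` decreases, `d ≤ |C| n / (|C| - 1) ≤ q^K n / (q^K - 1)`. -/

theorem AddMonoidHom.sum_comp_eq_card_ker_nsmul_sum_image {A B M : Type*} [AddGroup A]
    [Fintype A] [AddMonoid B] [DecidableEq B] [AddCommMonoid M] (f : A →+ B) (g : B → M) :
    ∑ a, g (f a) = #{a | f a = 0} • ∑ y ∈ univ.image f, g y := by
  rw [← sum_fiberwise_of_maps_to (fun a _ => mem_image_of_mem f (mem_univ a)), smul_sum]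
  refine sum_congr rfl fun y hy => ?_
  obtain ⟨a, -, rfl⟩ := mem_image.mp hy
  rw [sum_congr rfl fun b hb => congrArg g (mem_filter.mp hb).2, sum_const,
    AddMonoidHom.card_fiber_eq_of_mem_range f ⟨a, rfl⟩ ⟨0, map_zero f⟩]

theorem AddMonoidHom.card_eq_card_ker_mul_card_image {A B : Type*} [AddGroup A] [Fintype A]
    [AddMonoid B] [DecidableEq B] (f : A →+ B) :
    Fintype.card A = #{a | f a = 0} * #(univ.image f) := by
  have := f.sum_comp_eq_card_ker_nsmul_sum_image (fun _ => 1)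
  simpa only [sum_const, card_univ, smul_eq_mul, mul_one] using this

section MinimalGenerators

variable {R M : Type*} [CommRing R] [IsLocalRing R] [AddCommGroup M] [Module R M]

theorem coeff_mem_maximalIdeal_of_forall_card_le {S : Finset M}
    (hmin : ∀ T : Finset M, Submodule.span R (T : Set M) = Submodule.span R S → #S ≤ #T)
    {a : S → R} (ha : ∑ v, a v • (v : M) = 0) (v : S) : a v ∈ maximalIdeal R := by
  by_contra hv
  have hmem : (v : M) ∈ Submodule.span R (S.erase v : Set M) := by
    rw [← Submodule.smul_mem_iff_of_isUnit _ (notMem_maximalIdeal.mp hv),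
      eq_neg_of_add_eq_zero_left ((add_sum_erase _ _ (mem_univ v)).trans ha)]
    refine neg_mem (Submodule.sum_mem _ fun w hw => Submodule.smul_mem _ _ ?_)
    exact Submodule.subset_span
      (mem_erase.mpr ⟨Subtype.coe_injective.ne (ne_of_mem_erase hw), w.2⟩)
  have hspan : Submodule.span R (S.erase v : Set M) = Submodule.span R S := by
    conv_rhs => rw [← insert_erase v.2]
    rw [coe_insert, Submodule.span_insert_eq_span hmem]
  have hcard := hmin _ hspan
  rw [card_erase_of_mem v.2] at hcard
  have : 0 < #S := card_pos.mpr ⟨v, v.2⟩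
  omega

theorem card_quotient_maximalIdeal_pow_le_card_span [Finite M] {S : Finset M}
    (hmin : ∀ T : Finset M, Submodule.span R (T : Set M) = Submodule.span R S → #S ≤ #T) :
    Nat.card (R ⧸ maximalIdeal R) ^ #S ≤ Nat.card (Submodule.span R (S : Set M)) := by
  let φ : (S → R ⧸ maximalIdeal R) → Submodule.span R (S : Set M) := fun t =>
    ⟨∑ v, (t v).out • (v : M),
      Submodule.sum_mem _ fun v _ => Submodule.smul_mem _ _ (Submodule.subset_span v.2)⟩
  have hφ : Function.Injective φ := by
    intro t t' h
    have hsum : ∑ v, ((t v).out - (t' v).out) • (v : M) = 0 := by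
      simp only [sub_smul, sum_sub_distrib]
      exact sub_eq_zero.mpr (congrArg Subtype.val h)
    funext v
    rw [← Ideal.Quotient.mk_out (t v), ← Ideal.Quotient.mk_out (t' v), Ideal.Quotient.eq]
    exact coeff_mem_maximalIdeal_of_forall_card_le hmin hsum v
  calc Nat.card (R ⧸ maximalIdeal R) ^ #S = Nat.card (S → R ⧸ maximalIdeal R) := by
        rw [Nat.card_fun, Nat.card_eq_finsetCard]
    _ ≤ _ := Nat.card_le_card_of_injective φ hφ

end MinimalGenerators

theorem card_span_singleton_le_card_quotient {R : Type*} [CommRing R] [Finite R] {I : Ideal R}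
    {x : R} (hx : ∀ r ∈ I, r * x = 0) : Nat.card (Ideal.span {x}) ≤ Nat.card (R ⧸ I) := by
  let f : (R ⧸ I) →ₗ[R] R :=
    I.liftQ (LinearMap.toSpanSingleton R R x) fun r hr => by simp [hx r hr]
  have hrange : Ideal.span {x} = LinearMap.range f := by
    rw [Submodule.range_liftQ, ← LinearMap.span_singleton_eq_range, Ideal.submodule_span_eq]
  have : Finite (R ⧸ I) := .of_surjective _ Ideal.Quotient.mk_surjective
  rw [hrange]
  exact Nat.card_le_card_of_surjective _ f.surjective_rangeRestrict

theorem mul_pow_pred_eq_zero_of_mem_span_singleton {R : Type*} [CommRing R] {γ r : R} {s : ℕ}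
    (hs : 1 ≤ s) (hnil : γ ^ s = 0) (hr : r ∈ Ideal.span {γ}) : r * γ ^ (s - 1) = 0 := by
  obtain ⟨c, rfl⟩ := Ideal.mem_span_singleton'.mp hr
  rw [mul_assoc, ← pow_succ', Nat.sub_add_cancel hs, hnil, mul_zero]

theorem card_sub_one_mul_le_sum {ι K : Type*} [Fintype ι] [Ring K] [PartialOrder K]
    [IsOrderedRing K] {f : ι → K} {i₀ : ι} (h0 : f i₀ = 0) {d : K} (hd : ∀ i ≠ i₀, d ≤ f i) :
    (Fintype.card ι - 1) * d ≤ ∑ i, f i := by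
  classical
  rw [← sum_erase _ h0, ← Nat.cast_pred (Fintype.card_pos_iff.mpr ⟨i₀⟩), ← nsmul_eq_mul,
    ← card_univ, ← card_erase_of_mem (mem_univ i₀)]
  exact card_nsmul_le_sum _ _ _ fun i hi => hd i (ne_of_mem_erase hi)

theorem le_div_sub_one_mul_of_sub_one_mul_le {K : Type*} [Field K] [LinearOrder K]
    [IsStrictOrderedRing K] {Q N x d : K} (hQ : 1 < Q) (hQN : Q ≤ N) (hx : 0 ≤ x)
    (h : (N - 1) * d ≤ x * N) : d ≤ Q / (Q - 1) * x := by
  rw [div_mul_eq_mul_div, le_div_iff₀ (sub_pos.mpr hQ)]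
  nlinarith [mul_le_mul_of_nonneg_left h (sub_pos.mpr hQ).le,
    mul_nonneg hx (sub_nonneg.mpr hQN)]

section HomogeneousWeight

variable {R : Type*} [CommRing R] (γ : R) (s q : ℕ)

theorem wtHom_zero : wtHom γ s q 0 = 0 := if_pos rfl

theorem wtHom_of_ne_zero (hq : 1 < q) {y : R} (hy : y ≠ 0) :
    wtHom γ s q y = 1 + if y ∈ Ideal.span {γ ^ (s - 1)} then 1 / ((q : ℚ) - 1) else 0 := by
  have : (q : ℚ) - 1 ≠ 0 := sub_ne_zero.mpr (by exact_mod_cast hq.ne')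
  rw [wtHom, if_neg hy]
  split_ifs
  · field_simp
    ring
  · ring

theorem sum_wtHom_le_card [Finite R] (hq : 1 < q) (hJ : Nat.card (Ideal.span {γ ^ (s - 1)}) ≤ q)
    {T : Finset R} (h0 : 0 ∈ T) : ∑ y ∈ T, wtHom γ s q y ≤ #T := by
  set J := Ideal.span {γ ^ (s - 1)}
  have hq' : (1 : ℚ) < q := by exact_mod_cast hq
  have hTJ : #(T.filter (· ∈ J)) ≤ q := by
    refine le_trans ?_ hJ
    rw [← SetLike.coe_sort_coe, Nat.card_coe_set_eq, ← Set.ncard_coe_finset]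
    exact Set.ncard_le_ncard (fun y hy => (mem_filter.mp hy).2) (Set.toFinite _)
  have hcard : (#((T.erase 0).filter (· ∈ J)) : ℚ) ≤ q - 1 := by
    rw [filter_erase, card_erase_of_mem (mem_filter.mpr ⟨h0, J.zero_mem⟩)]
    have : 1 ≤ #(T.filter (· ∈ J)) := card_pos.mpr ⟨0, mem_filter.mpr ⟨h0, J.zero_mem⟩⟩
    rw [Nat.cast_sub this]
    push_cast
    linarith [(Nat.cast_le (α := ℚ)).mpr hTJ]
  calc ∑ y ∈ T, wtHom γ s q y
      = ∑ y ∈ T.erase 0, (1 + if y ∈ J then 1 / ((q : ℚ) - 1) else 0) := by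
        rw [← sum_erase _ (wtHom_zero γ s q)]
        exact sum_congr rfl fun y hy => wtHom_of_ne_zero γ s q hq (ne_of_mem_erase hy)
    _ = (#T - 1) + #((T.erase 0).filter (· ∈ J)) * (1 / ((q : ℚ) - 1)) := by
        rw [sum_add_distrib, sum_ite, sum_const_zero, add_zero, sum_const, sum_const,
          card_erase_of_mem h0, nsmul_eq_mul, nsmul_eq_mul, mul_one,
          Nat.cast_pred (card_pos.mpr ⟨0, h0⟩)]
    _ ≤ (#T - 1) + ((q : ℚ) - 1) * (1 / ((q : ℚ) - 1)) := by gcongr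
    _ = #T := by rw [mul_one_div_cancel (by linarith)]; ring

end HomogeneousWeight

section Code

variable {R : Type*} [CommRing R] [Finite R] (γ : R) (s q : ℕ) {n : ℕ}
  (C : Submodule R (Fin n → R)) [Fintype C]

theorem sum_wtHom_apply_le_card (hq : 1 < q) (hJ : Nat.card (Ideal.span {γ ^ (s - 1)}) ≤ q)
    (i : Fin n) : ∑ c : C, wtHom γ s q ((c : Fin n → R) i) ≤ Fintype.card C := by
  let f : C →+ R := (Pi.evalAddMonoidHom (fun _ => R) i).comp C.subtype.toAddMonoidHom
  calc ∑ c : C, wtHom γ s q ((c : Fin n → R) i)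
      = #{c | f c = 0} • ∑ y ∈ univ.image f, wtHom γ s q y :=
        f.sum_comp_eq_card_ker_nsmul_sum_image _
    _ ≤ #{c | f c = 0} • (#(univ.image f) : ℚ) :=
        nsmul_le_nsmul_right (sum_wtHom_le_card γ s q hq hJ
          (mem_image.mpr ⟨0, mem_univ _, map_zero f⟩)) _
    _ = Fintype.card C := by
        rw [f.card_eq_card_ker_mul_card_image, nsmul_eq_mul, Nat.cast_mul]

theorem sum_wtHomV_le (hq : 1 < q) (hJ : Nat.card (Ideal.span {γ ^ (s - 1)}) ≤ q) :
    ∑ c : C, wtHomV γ s q (c : Fin n → R) ≤ n * Fintype.card C :=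
  calc ∑ c : C, wtHomV γ s q (c : Fin n → R)
      = ∑ i, ∑ c : C, wtHom γ s q ((c : Fin n → R) i) := sum_comm
    _ ≤ ∑ _i : Fin n, (Fintype.card C : ℚ) :=
        sum_le_sum fun i _ => sum_wtHom_apply_le_card γ s q C hq hJ i
    _ = n * Fintype.card C := by simp

end Code

theorem homogeneous_plotkin_bound_rank_general {R : Type*} [CommRing R] [IsLocalRing R] [Fintype R]
    (γ : R) (s q : ℕ) (hs : 1 ≤ s)
    (hmax : IsLocalRing.maximalIdeal R = Ideal.span {γ})
    (hnil : γ ^ s = 0)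
    (hq : Nat.card (R ⧸ IsLocalRing.maximalIdeal R) = q)
    {n : ℕ} (C : Submodule R (Fin n → R)) (K : ℕ) (hK1 : 1 ≤ K)
    (hK : IsCodeRank C K) (d : ℚ)
    (hd : IsLeast {w : ℚ | ∃ c ∈ C, c ≠ 0 ∧ wtHomV γ s q c = w} d) :
    d ≤ ((q : ℚ) ^ K) / ((q : ℚ) ^ K - 1) * n := by
  have hq1 : 1 < q := hq ▸ Finite.one_lt_card
  have hsocle : Nat.card (Ideal.span {γ ^ (s - 1)}) ≤ q := hq ▸
    card_span_singleton_le_card_quotient fun r hr =>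
      mul_pow_pred_eq_zero_of_mem_span_singleton hs hnil (hmax ▸ hr)
  obtain ⟨S, rfl, rfl⟩ := hK.1
  have hcard : q ^ #S ≤ Fintype.card (Submodule.span R (S : Set (Fin n → R))) := by
    rw [← Nat.card_eq_fintype_card, ← hq]
    exact card_quotient_maximalIdeal_pow_le_card_span fun T hT => hK.2 ⟨T, rfl, hT⟩
  have hlow := card_sub_one_mul_le_sum (f := fun c : Submodule.span R (S : Set (Fin n → R)) =>
    wtHomV γ s q (c : Fin n → R)) (i₀ := 0) (by simp [wtHomV, wtHom_zero])
    (d := d) fun c hc => hd.2 ⟨c, c.2, by simpa using hc, rfl⟩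
  exact le_div_sub_one_mul_of_sub_one_mul_le (one_lt_pow₀ (by exact_mod_cast hq1) (by omega))
    (by exact_mod_cast hcard) n.cast_nonneg (hlow.trans (sum_wtHomV_le γ s q _ hq1 hsocle))

/-- Weakened Plotkin bound in terms of the rank: `d ≤ q^K/(q^K - 1)·n`. -/
theorem homogeneous_plotkin_bound_rank {R : Type*} [CommRing R] [IsLocalRing R] [Fintype R]
    (γ : R) (s q : ℕ) (hs : 1 ≤ s)
    (hmax : IsLocalRing.maximalIdeal R = Ideal.span {γ})
    (hnil : γ ^ s = 0) (hnil' : γ ^ (s - 1) ≠ 0)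
    (hq : Nat.card (R ⧸ IsLocalRing.maximalIdeal R) = q)
    {n : ℕ} (C : Submodule R (Fin n → R)) (K : ℕ) (hK1 : 1 ≤ K)
    (hK : IsCodeRank C K) (d : ℚ)
    (hd : IsLeast {w : ℚ | ∃ c ∈ C, c ≠ 0 ∧ wtHomV γ s q c = w} d) :
    d ≤ ((q : ℚ) ^ K) / ((q : ℚ) ^ K - 1) * n :=
  homogeneous_plotkin_bound_rank_general γ s q hs hmax hnil hq C K hK1 hK d hd
end
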